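/- arXiv:1408.3225 — 2 statements merged into one kernel-verified Lean document; each statement's English description precedes it below -/
import Mathlib

section
/- For all coprime positive integers a and b, 4a·I(a,b) + 4b·I(b,a) = (a-1)(b-1)(a+b-1). -/
/-!
Write `q k = ⌊a k / b⌋`. A pair `i < j` is an inversion of `x ↦ a x mod b` exactly when adding
`a i` and `a (j - i)` produces a carry modulo `b`, i.e. it contributes `q j - q i - q (j - i)`;
summing gives `I(a, b) = ∑ k, (3k - 2b + 1) q k`. As `x ↦ a x mod b` permutes the residues,
`2 ∑ q k = (a - 1)(b - 1)`, so only `S(a, b) = ∑ k q k` is left. Counting the lattice points of the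
rectangle `0 < k < b`, `0 < m < a` on either side of the line `b m = a k` turns
`a S(a, b) + b S(b, a)` into `∑ max (a k) (b m)`, hence into `∑ |a k - b m|`, and that sum is
evaluated along the Euclidean algorithm: replacing `a` by `a + b` adds an explicit polynomial.
-/

/-- The sawtooth function ((x)) = x - ⌊x⌋ - 1/2 for non-integer x, and 0 for integer x. -/
def saw (x : ℚ) : ℚ := if x.den = 1 then 0 else x - ⌊x⌋ - 1/2

/-- The Dedekind sum s(a,b) = Σ_{k=1}^{b-1} ((k/b))((ka/b)). -/
def dedekindSum (a b : ℕ) : ℚ :=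
  ∑ k ∈ Finset.range b, saw ((k : ℚ) / b) * saw ((k * a : ℚ) / b)

/-- I(a,b): the number of inversions of the permutation x ↦ ax mod b on {0,...,b-1}. -/
def inv' (a b : ℕ) : ℕ :=
  (((Finset.range b) ×ˢ (Finset.range b)).filter
    (fun p => p.1 < p.2 ∧ (a * p.2) % b < (a * p.1) % b)).card

open Finset

theorem two_mul_sum_range_cast (n : ℕ) : 2 * ∑ k ∈ range n, (k : ℤ) = n * (n - 1) := by
  induction n with
  | zero => simp
  | succ n ih => rw [sum_range_succ]; push_cast; linear_combination ih

theorem six_mul_sum_range_sq_cast (n : ℕ) :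
    6 * ∑ k ∈ range n, (k : ℤ) ^ 2 = n * (n - 1) * (2 * n - 1) := by
  induction n with
  | zero => simp
  | succ n ih => rw [sum_range_succ]; push_cast; linear_combination ih

theorem two_mul_sum_Ico_cast {p q : ℕ} (h : p ≤ q) :
    2 * ∑ k ∈ Ico p q, (k : ℤ) = q * (q - 1) - p * (p - 1) := by
  rw [sum_Ico_eq_sub _ h, mul_sub, two_mul_sum_range_cast, two_mul_sum_range_cast]

theorem Nat.ite_add_mod_lt_mod_eq_sub_div (x y b : ℕ) :
    (if (x + y) % b < x % b then 1 else 0 : ℤ) = ((x + y) / b : ℕ) - (x / b : ℕ) - (y / b : ℕ) := by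
  rcases b.eq_zero_or_pos with rfl | hb
  · simp
  have hy := Nat.mod_lt y hb
  have hmod := Nat.add_mod_add_ite x y b
  rw [Nat.add_div hb]
  by_cases hc : b ≤ x % b + y % b
  · rw [if_pos hc] at hmod ⊢; rw [if_pos (by omega)]; push_cast; ring
  · rw [if_neg hc] at hmod ⊢; rw [if_neg (by omega)]; push_cast; ring

theorem sum_range_sum_range_sub_sub (f : ℕ → ℤ) (hf : f 0 = 0) (n : ℕ) :
    ∑ j ∈ range n, ∑ i ∈ range j, (f j - f i - f (j - i)) =
      ∑ k ∈ range n, (3 * k - 2 * n + 1) * f k := by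
  induction n with
  | zero => simp
  | succ n ih =>
    have reflect : ∑ i ∈ range n, f (n - i) = ∑ i ∈ range (n + 1), f i := by
      rw [sum_range_succ', hf, add_zero, ← sum_range_reflect]
      exact sum_congr rfl fun i hi => by rw [mem_range] at hi; congr 1; omega
    have coeff (k : ℕ) :
        (3 * k - 2 * (n + 1 : ℕ) + 1 : ℤ) * f k = (3 * k - 2 * n + 1) * f k - 2 * f k := by
      push_cast; ring
    rw [sum_range_succ, ih, sum_sub_distrib, sum_sub_distrib, reflect, sum_const, card_range,
      sum_range_succ, sum_range_succ _ n, nsmul_eq_mul]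
    simp only [coeff, sum_sub_distrib, ← mul_sum]
    ring

theorem sum_range_mul_mod_of_coprime {a b : ℕ} (hab : a.Coprime b) :
    ∑ k ∈ range b, a * k % b = ∑ k ∈ range b, k := by
  have hmaps : Set.MapsTo (fun k => a * k % b) (range b) (range b) := fun k hk =>
    mem_range.2 (Nat.mod_lt _ (Nat.zero_lt_of_lt (mem_range.1 hk)))
  have hinj : Set.InjOn (fun k => a * k % b) (range b) := fun k hk l hl h => by
    simp only [coe_range, Set.mem_Iio] at hk hl
    have hab' : Nat.gcd b a = 1 := Nat.coprime_comm.1 hab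
    exact Nat.ModEq.eq_of_lt_of_lt (Nat.ModEq.cancel_left_of_coprime hab' h) hk hl
  exact sum_nbij (g := fun k => k) (fun k => a * k % b) (fun k hk => hmaps hk) hinj
    (surjOn_of_injOn_of_card_le _ hmaps hinj le_rfl) fun _ _ => rfl

theorem two_mul_sum_range_mul_div_of_coprime {a b : ℕ} (hab : a.Coprime b) :
    2 * ∑ k ∈ range b, ((a * k / b : ℕ) : ℤ) = (a - 1) * (b - 1) := by
  rcases b.eq_zero_or_pos with rfl | hb
  · simp [(Nat.coprime_zero_right a).1 hab]
  have hsum : (b : ℤ) * ∑ k ∈ range b, ((a * k / b : ℕ) : ℤ) =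
      a * ∑ k ∈ range b, (k : ℤ) - ∑ k ∈ range b, ((a * k % b : ℕ) : ℤ) := by
    rw [mul_sum, mul_sum, ← sum_sub_distrib]
    refine sum_congr rfl fun k _ => ?_
    have : (b : ℤ) * (a * k / b : ℕ) + (a * k % b : ℕ) = a * k := by
      exact_mod_cast Nat.div_add_mod (a * k) b
    linear_combination this
  have hres : ∑ k ∈ range b, ((a * k % b : ℕ) : ℤ) = ∑ k ∈ range b, (k : ℤ) := by
    rw [← Nat.cast_sum, ← Nat.cast_sum, sum_range_mul_mod_of_coprime hab]
  refine mul_left_cancel₀ (b := _) (Int.natCast_ne_zero.2 hb.ne') ?_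
  linear_combination 2 * hsum - 2 * hres + (a - 1) * two_mul_sum_range_cast b

theorem inv'_eq_sum_ite (a b : ℕ) :
    (inv' a b : ℤ) = ∑ j ∈ range b, ∑ i ∈ range j, if a * j % b < a * i % b then 1 else 0 := by
  rw [inv', natCast_card_filter, sum_product_right]
  refine sum_congr rfl fun j hj => ?_
  rw [← sum_range_add_sum_Ico _ (mem_range.1 hj).le, sum_eq_zero (s := Ico j b), add_zero]
  · exact sum_congr rfl fun i hi => by simp [mem_range.1 hi]
  · intro i hi
    simp [(mem_Ico.1 hi).1.not_gt]

theorem inv'_eq_sum_range_mul_div (a b : ℕ) :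
    (inv' a b : ℤ) = ∑ k ∈ range b, (3 * k - 2 * b + 1) * ((a * k / b : ℕ) : ℤ) := by
  rw [inv'_eq_sum_ite, ← sum_range_sum_range_sub_sub _ (by simp)]
  refine sum_congr rfl fun j _ => sum_congr rfl fun i hi => ?_
  have hij : a * j = a * i + a * (j - i) := by
    rw [← mul_add, Nat.add_sub_cancel' (mem_range.1 hi).le]
  rw [hij, Nat.ite_add_mod_lt_mod_eq_sub_div, ← hij]

def weightedFloorSum (a b : ℕ) : ℤ := ∑ k ∈ range b, (k : ℤ) * (a * k / b : ℕ)

def absDiffSum (a b : ℕ) : ℤ := ∑ k ∈ Ico 1 b, ∑ m ∈ Ico 1 a, |(a : ℤ) * k - b * m|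

theorem two_mul_inv'_eq {a b : ℕ} (hab : a.Coprime b) :
    2 * (inv' a b : ℤ) = 6 * weightedFloorSum a b + (1 - 2 * b) * ((a - 1) * (b - 1)) := by
  rw [← two_mul_sum_range_mul_div_of_coprime hab, inv'_eq_sum_range_mul_div, weightedFloorSum,
    mul_sum, mul_sum, mul_sum, mul_sum, ← sum_add_distrib]
  exact sum_congr rfl fun k _ => by ring

theorem card_filter_mul_lt_mul_of_coprime {a b k : ℕ} (hab : a.Coprime b) (hk : k < b) :
    #{m ∈ Ico 1 a | b * m < a * k} = a * k / b := by
  have hb : 0 < b := by omega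
  suffices {m ∈ Ico 1 a | b * m < a * k} = Ico 1 (a * k / b + 1) by simp [this]
  ext m
  simp only [mem_filter, mem_Ico, Nat.lt_succ_iff, Nat.le_div_iff_mul_le hb]
  constructor
  · rintro ⟨⟨hm, -⟩, hlt⟩
    exact ⟨hm, by linarith⟩
  · rintro ⟨hm, hle⟩
    have hne : m * b ≠ a * k := fun h => by
      have : b ∣ k := (Nat.Coprime.dvd_of_dvd_mul_left hab.symm) ⟨m, by linarith⟩
      have := Nat.le_of_dvd (by nlinarith) this
      omega
    refine ⟨⟨hm, ?_⟩, by rw [mul_comm]; omega⟩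
    by_contra! ham
    nlinarith

theorem mul_weightedFloorSum_eq_sum {a b : ℕ} (hab : a.Coprime b) :
    a * weightedFloorSum a b =
      ∑ k ∈ Ico 1 b, ∑ m ∈ Ico 1 a, if b * m < a * k then (a * k : ℤ) else 0 := by
  rw [weightedFloorSum, mul_sum,
    ← sum_subset (s₁ := Ico 1 b) fun k hk => mem_range.2 (mem_Ico.1 hk).2]
  · refine sum_congr rfl fun k hk => ?_
    rw [← sum_filter, sum_const, card_filter_mul_lt_mul_of_coprime hab (mem_Ico.1 hk).2,
      nsmul_eq_mul]
    ring
  · intro k hkb hk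
    obtain rfl : k = 0 := by
      by_contra hk0
      exact hk (mem_Ico.2 ⟨Nat.pos_of_ne_zero hk0, mem_range.1 hkb⟩)
    simp

theorem two_mul_reciprocity {a b : ℕ} (ha : 0 < a) (hb : 0 < b) (hab : a.Coprime b) :
    2 * (a * weightedFloorSum a b + b * weightedFloorSum b a) =
      a * b * (a - 1) * (b - 1) + absDiffSum a b := by
  have termwise : ∀ k ∈ Ico 1 b, ∀ m ∈ Ico 1 a,
      2 * ((if b * m < a * k then (a * k : ℤ) else 0) + if a * k < b * m then (b * m : ℤ) else 0) =
        (a * k + b * m) + |(a : ℤ) * k - b * m| := by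
    intro k hk m _
    have hne : a * k ≠ b * m := fun h => by
      have := Nat.le_of_dvd (mem_Ico.1 hk).1 ((Nat.Coprime.dvd_of_dvd_mul_left hab.symm) ⟨m, h⟩)
      have := (mem_Ico.1 hk).2
      omega
    rcases hne.lt_or_gt with h | h
    · have h' : (a * k : ℤ) < b * m := by exact_mod_cast h
      rw [if_neg h.not_gt, if_pos h, abs_of_neg (by linarith)]; ring
    · have h' : (b * m : ℤ) < a * k := by exact_mod_cast h
      rw [if_pos h, if_neg h.not_gt, abs_of_pos (by linarith)]; ring
  have hsum : ∑ k ∈ Ico 1 b, ∑ m ∈ Ico 1 a, (a * k + b * m : ℤ) = a * b * (a - 1) * (b - 1) := by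
    refine mul_left_cancel₀ (two_ne_zero (α := ℤ)) ?_
    simp only [sum_add_distrib, sum_const, Nat.card_Ico, nsmul_eq_mul, ← mul_sum]
    push_cast [Nat.cast_sub (show 1 ≤ a from ha), Nat.cast_sub (show 1 ≤ b from hb)]
    linear_combination a * (a - 1) * two_mul_sum_Ico_cast (show 1 ≤ b from hb) +
      b * (b - 1) * two_mul_sum_Ico_cast (show 1 ≤ a from ha)
  have hba := mul_weightedFloorSum_eq_sum hab.symm
  rw [sum_comm] at hba
  rw [absDiffSum, ← hsum, mul_weightedFloorSum_eq_sum hab, hba, ← sum_add_distrib, mul_sum,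
    ← sum_add_distrib]
  refine sum_congr rfl fun k hk => ?_
  rw [← sum_add_distrib, mul_sum, ← sum_add_distrib]
  exact sum_congr rfl fun m hm => termwise k hk m hm

theorem absDiffSum_comm (a b : ℕ) : absDiffSum a b = absDiffSum b a := by
  rw [absDiffSum, absDiffSum, sum_comm]
  exact sum_congr rfl fun _ _ => sum_congr rfl fun _ _ => abs_sub_comm _ _

theorem two_mul_sum_abs_sub_add_left {a b k : ℕ} (ha : 0 < a) (hk : k < b) :
    2 * ∑ m ∈ Ico 1 (a + b), |((a + b : ℕ) : ℤ) * k - b * m| =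
      2 * ∑ m ∈ Ico 1 a, |(a : ℤ) * k - b * m| +
        ((4 * a + 2 * b) * k ^ 2 - (4 * a * b + 2 * b ^ 2) * k + b * (2 * a * b + b ^ 2 - b)) := by
  rw [← sum_Ico_consecutive _ (show 1 ≤ 1 + k by omega) (show 1 + k ≤ a + b by omega),
    ← sum_Ico_consecutive _ (show 1 + k ≤ a + k by omega) (show a + k ≤ a + b by omega)]
  have below : ∑ m ∈ Ico 1 (1 + k), |((a + b : ℕ) : ℤ) * k - b * m| =
      ∑ m ∈ Ico 1 (1 + k), (((a + b : ℕ) : ℤ) * k - b * m) := by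
    refine sum_congr rfl fun m hm => abs_of_nonneg ?_
    have : (m : ℤ) ≤ k := by have := mem_Ico.1 hm; omega
    push_cast; nlinarith
  have middle : ∑ m ∈ Ico (1 + k) (a + k), |((a + b : ℕ) : ℤ) * k - b * m| =
      ∑ m ∈ Ico 1 a, |(a : ℤ) * k - b * m| := by
    rw [← sum_Ico_add']
    exact sum_congr rfl fun m _ => by push_cast; ring_nf
  have above : ∑ m ∈ Ico (a + k) (a + b), |((a + b : ℕ) : ℤ) * k - b * m| =
      ∑ m ∈ Ico (a + k) (a + b), (b * m - ((a + b : ℕ) : ℤ) * k) := by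
    refine sum_congr rfl fun m hm => ?_
    rw [abs_sub_comm]
    refine abs_of_nonneg ?_
    have : (a + k : ℤ) ≤ m := by have := mem_Ico.1 hm; omega
    have : (k : ℤ) ≤ b := by omega
    push_cast; nlinarith
  rw [below, middle, above, sum_sub_distrib, sum_sub_distrib, sum_const, sum_const, Nat.card_Ico,
    Nat.card_Ico, ← mul_sum, ← mul_sum, nsmul_eq_mul, nsmul_eq_mul]
  have sum_below := two_mul_sum_Ico_cast (show 1 ≤ 1 + k by omega)
  have sum_above := two_mul_sum_Ico_cast (show a + k ≤ a + b by omega)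
  push_cast [Nat.add_sub_cancel_left, Nat.cast_sub (show a + k ≤ a + b by omega)]
    at sum_below sum_above ⊢
  linear_combination b * sum_above - b * sum_below

theorem six_mul_absDiffSum_add_left {a b : ℕ} (ha : 0 < a) :
    6 * absDiffSum (a + b) b =
      6 * absDiffSum a b + 2 * b * (b - 1) * (2 * a * b - a + b ^ 2 - 2 * b) := by
  rcases b.eq_zero_or_pos with rfl | hb
  · simp [absDiffSum]
  have rows : 2 * absDiffSum (a + b) b = 2 * absDiffSum a b +
      ∑ k ∈ Ico 1 b,
        ((4 * a + 2 * b) * k ^ 2 - (4 * a * b + 2 * b ^ 2) * k + b * (2 * a * b + b ^ 2 - b) : ℤ) := by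
    rw [absDiffSum, absDiffSum, mul_sum, mul_sum, ← sum_add_distrib]
    exact sum_congr rfl fun k hk => two_mul_sum_abs_sub_add_left ha (mem_Ico.1 hk).2
  rw [sum_Ico_eq_sub _ hb, sum_range_one, sum_add_distrib, sum_sub_distrib, ← mul_sum, ← mul_sum,
    sum_const, card_range, nsmul_eq_mul] at rows
  linear_combination 3 * rows + (2 * a + b) * six_mul_sum_range_sq_cast b -
    (6 * a * b + 3 * b ^ 2) * two_mul_sum_range_cast b

theorem six_mul_absDiffSum_of_coprime {a b : ℕ} (hab : a.Coprime b) :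
    6 * absDiffSum a b = (a - 1) * (b - 1) * (2 * a * b - a - b - 1) := by
  induction h : a + b using Nat.strong_induction_on generalizing a b with
  | _ n ih =>
  wlog hba : b ≤ a generalizing a b
  · rw [absDiffSum_comm, this hab.symm (by omega) (by omega)]
    ring
  rcases b.eq_zero_or_pos with rfl | hb
  · simp [(Nat.coprime_zero_right a).1 hab, absDiffSum]
  obtain ⟨c, rfl⟩ : ∃ c, a = c + b := ⟨a - b, by omega⟩
  rcases c.eq_zero_or_pos with rfl | hc
  · obtain rfl : b = 1 := by simpa using hab
    simp [absDiffSum]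
  rw [six_mul_absDiffSum_add_left hc, ih (c + b) (by omega) (Nat.coprime_add_self_left.1 hab) rfl]
  push_cast
  ring

theorem salie (a b : ℕ) (ha : 0 < a) (hb : 0 < b) (hab : Nat.Coprime a b) :
    4 * a * inv' a b + 4 * b * inv' b a = (a - 1) * (b - 1) * (a + b - 1) := by
  have key : (4 * a * inv' a b + 4 * b * inv' b a : ℤ) = (a - 1) * (b - 1) * (a + b - 1) := by
    linear_combination 2 * a * two_mul_inv'_eq hab + 2 * b * two_mul_inv'_eq hab.symm +
      6 * two_mul_reciprocity ha hb hab + six_mul_absDiffSum_of_coprime hab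
  have hab1 : 1 ≤ a + b := by omega
  zify [ha, hb, hab1]
  exact key
end

section
/- Let a₁, a₂ be positive integers coprime to a positive integer b. Then 4·I(a₁,b) ≡ 4·I(a₂,b) (mod b) if and only if 12·s(a₁,b) - 12·s(a₂,b) is an integer. -/
/-!
Write `r k = k * a % b`. Expanding the sawtooth gives `4 b² s(a,b) = Σ (2k - b)(2 r k - b) - b²`,
and since `r i + r (j - i) - r j = b · [r j < r i]` for `i < j`, summing over all pairs gives
`b · I(a,b) = Σ (2b - 1 - 3k) r k`. In the combination `3 · 4b² s + 4 · b I` the mixed terms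
`k · r k` cancel, and as `r` permutes `range b` what remains is
`12 b s(a,b) = (b-1)(b-2) - 4 I(a,b)`.
Hence `12 s(a₁,b) - 12 s(a₂,b) = 4 (I(a₂,b) - I(a₁,b)) / b`.
-/

open Finset

lemma saw_natCast_div {m b : ℕ} (hb : b ≠ 0) (h : ¬ b ∣ m) :
    saw (m / b) = (m % b : ℕ) / b - 1 / 2 := by
  rw [saw, if_neg (by rwa [Rat.den_div_natCast_eq_one_iff m b hb]), Int.self_sub_floor,
    Int.fract_div_natCast_eq_div_natCast_mod]

lemma sum_range_comp_mul_mod {M : Type*} [AddCommMonoid M] (f : ℕ → M) {a b : ℕ}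
    (h : a.Coprime b) : ∑ k ∈ range b, f (k * a % b) = ∑ k ∈ range b, f k := by
  have hinj : Set.InjOn (· * a % b) (range b) := fun i hi j hj hij =>
    (Nat.ModEq.cancel_right_of_coprime (by rwa [Nat.gcd_comm]) hij).eq_of_lt_of_lt
      (mem_range.mp hi) (mem_range.mp hj)
  have himage : (range b).image (· * a % b) = range b :=
    eq_of_subset_of_card_le
      (image_subset_iff.mpr fun k hk => mem_range.mpr (Nat.mod_lt _ (by grind)))
      (card_image_of_injOn hinj).ge
  rw [← sum_image hinj, himage]

lemma mod_add_mod_eq_add_mod_add_ite (x y b : ℕ) :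
    x % b + y % b = (x + y) % b + if (x + y) % b < x % b then b else 0 := by
  rcases Nat.eq_zero_or_pos b with rfl | hb
  · simp
  have := Nat.mod_lt y hb
  have := Nat.add_mod_add_ite x y b
  split_ifs at * <;> omega

lemma sum_range_sum_range_add_sub {R : Type*} [CommRing R] (f : ℕ → R) (hf : f 0 = 0)
    (n : ℕ) :
    ∑ j ∈ range n, ∑ i ∈ range j, (f i + f (j - i) - f j)
      = ∑ k ∈ range n, (2 * n - 1 - 3 * k) * f k := by
  induction n with
  | zero => simp
  | succ n ih =>
    have hreflect : ∑ i ∈ range n, f (n - i) = ∑ k ∈ range n, f k + f n := by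
      rw [← sum_range_succ, sum_range_succ', hf, add_zero,
        ← sum_range_reflect (fun i => f (i + 1))]
      exact sum_congr rfl fun i hi => congrArg f (by grind)
    have hcoeff : ∑ k ∈ range n, (2 * (n + 1 : ℕ) - 1 - 3 * k) * f k
        = ∑ k ∈ range n, (2 * n - 1 - 3 * k) * f k + 2 * ∑ k ∈ range n, f k := by
      rw [mul_sum, ← sum_add_distrib]
      exact sum_congr rfl fun k _ => by push_cast; ring
    rw [sum_range_succ, ih, sum_sub_distrib, sum_add_distrib, hreflect, sum_range_succ, hcoeff,
      sum_const, card_range, nsmul_eq_mul]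
    push_cast
    ring

lemma inv'_eq_sum (a b : ℕ) :
    inv' a b = ∑ j ∈ range b, ∑ i ∈ range j, if j * a % b < i * a % b then 1 else 0 := by
  rw [inv', card_filter, sum_product_right]
  refine sum_congr rfl fun j hj => ?_
  have hrange : range j = (range b).filter (· < j) := by
    ext i
    simp only [mem_range, mem_filter]
    grind
  rw [hrange, sum_filter]
  simp only [ite_and, mul_comm a]

lemma mul_inv'_eq_sum {R : Type*} [CommRing R] (a b : ℕ) :
    (b * inv' a b : R) = ∑ k ∈ range b, (2 * b - 1 - 3 * k : R) * (k * a % b : ℕ) := by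
  rw [inv'_eq_sum, ← sum_range_sum_range_add_sub (fun k => ((k * a % b : ℕ) : R)) (by simp)]
  push_cast
  rw [mul_sum]
  refine sum_congr rfl fun j _ => ?_
  rw [mul_sum]
  refine sum_congr rfl fun i hi => ?_
  have hmod := mod_add_mod_eq_add_mod_add_ite (i * a) ((j - i) * a) b
  rw [← add_mul, Nat.add_sub_cancel' (mem_range.mp hi).le] at hmod
  rw [← Nat.cast_add, hmod]
  split_ifs <;> push_cast <;> ring

lemma four_mul_sq_mul_dedekindSum {a b : ℕ} (hb : 0 < b) (h : a.Coprime b) :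
    4 * b ^ 2 * dedekindSum a b
      = ∑ k ∈ range b, (2 * k - b : ℚ) * (2 * (k * a % b : ℕ) - b) - b ^ 2 := by
  have hterm : ∀ k ∈ range b, 0 < k →
      4 * b ^ 2 * (saw (k / b) * saw (k * a / b))
        = (2 * k - b : ℚ) * (2 * (k * a % b : ℕ) - b) := by
    intro k hk hk0
    have hkb : ¬ b ∣ k := Nat.not_dvd_of_pos_of_lt hk0 (mem_range.mp hk)
    rw [← Nat.cast_mul, saw_natCast_div hb.ne' hkb,
      saw_natCast_div hb.ne' fun hka => hkb (h.symm.dvd_of_dvd_mul_right hka),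
      Nat.mod_eq_of_lt (mem_range.mp hk)]
    field_simp
    ring
  obtain ⟨n, rfl⟩ := Nat.exists_eq_add_one_of_ne_zero hb.ne'
  rw [dedekindSum, mul_sum, sum_range_succ', sum_range_succ',
    sum_congr rfl fun k hk => hterm (k + 1) (by simpa using hk) k.succ_pos]
  have hsaw0 : saw 0 = 0 := by simp [saw]
  simp only [Nat.cast_zero, zero_div, zero_mul, Nat.zero_mod, hsaw0, mul_zero]
  ring

theorem twelve_mul_dedekindSum {a b : ℕ} (hb : 0 < b) (h : a.Coprime b) :
    12 * b * dedekindSum a b = (b - 1) * (b - 2) - 4 * inv' a b := by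
  have hperm : ∑ k ∈ range b, ((k * a % b : ℕ) : ℚ) = ∑ k ∈ range b, (k : ℚ) :=
    sum_range_comp_mul_mod (fun k => (k : ℚ)) h
  have hgauss : (∑ k ∈ range b, (k : ℚ)) * 2 = b * (b - 1) := by
    rw [← Nat.cast_pred hb, ← Nat.cast_sum]
    exact_mod_cast sum_range_id_mul_two b
  have hcombined : ∑ k ∈ range b, (3 * ((2 * k - b : ℚ) * (2 * (k * a % b : ℕ) - b))
        + 4 * ((2 * b - 1 - 3 * k : ℚ) * (k * a % b : ℕ)))
      = ∑ k ∈ range b, (3 * b ^ 2 + (2 * b - 4) * ((k * a % b : ℕ) : ℚ) - 6 * b * k) :=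
    sum_congr rfl fun _ _ => by ring
  rw [sum_add_distrib, sum_sub_distrib, sum_add_distrib, sum_const, card_range, nsmul_eq_mul,
    ← mul_sum, ← mul_sum, ← mul_sum, ← mul_sum] at hcombined
  refine mul_left_cancel₀ (Nat.cast_ne_zero.mpr hb.ne' : (b : ℚ) ≠ 0) ?_
  linear_combination 3 * four_mul_sq_mul_dedekindSum hb h + hcombined
    + 4 * mul_inv'_eq_sum (R := ℚ) a b + (2 * b - 4) * hperm - (2 * b + 2) * hgauss

lemma exists_intCast_eq_div_iff_dvd {m b : ℤ} (hb : b ≠ 0) :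
    (∃ n : ℤ, (m / b : ℚ) = n) ↔ b ∣ m := by
  have hb' : (b : ℚ) ≠ 0 := Int.cast_ne_zero.mpr hb
  constructor
  · rintro ⟨n, hn⟩
    rw [div_eq_iff hb'] at hn
    exact ⟨n, by exact_mod_cast hn.trans (mul_comm _ _)⟩
  · rintro ⟨c, rfl⟩
    exact ⟨c, by push_cast; field_simp⟩

theorem four_inv_congr_iff_twelve_int_general (a₁ a₂ b : ℕ) (hb : 0 < b)
    (h₁ : Nat.Coprime a₁ b) (h₂ : Nat.Coprime a₂ b) :
    (4 * inv' a₁ b : ℤ) ≡ 4 * inv' a₂ b [ZMOD (b : ℤ)] ↔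
      ∃ n : ℤ, 12 * dedekindSum a₁ b - 12 * dedekindSum a₂ b = n := by
  have hdiff : 12 * dedekindSum a₁ b - 12 * dedekindSum a₂ b
      = ((4 * inv' a₂ b - 4 * inv' a₁ b : ℤ) : ℚ) / (b : ℤ) := by
    rw [eq_div_iff (by positivity)]
    push_cast
    linear_combination twelve_mul_dedekindSum hb h₁ - twelve_mul_dedekindSum hb h₂
  rw [hdiff, exists_intCast_eq_div_iff_dvd (by positivity), Int.modEq_iff_dvd]

theorem four_inv_congr_iff_twelve_int (a₁ a₂ b : ℕ) (ha₁ : 0 < a₁) (ha₂ : 0 < a₂) (hb : 0 < b)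
    (h₁ : Nat.Coprime a₁ b) (h₂ : Nat.Coprime a₂ b) :
    (4 * inv' a₁ b : ℤ) ≡ 4 * inv' a₂ b [ZMOD (b : ℤ)] ↔
      ∃ n : ℤ, 12 * dedekindSum a₁ b - 12 * dedekindSum a₂ b = n :=
  four_inv_congr_iff_twelve_int_general a₁ a₂ b hb h₁ h₂
end
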